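/- In any witness chain (w_0,ψ_0),…,(w_n,ψ_n) for (φ, ψ, M, w) where φ = ⟨α₁⟩…⟨α_k⟩ψ and α_k = β* is an iteration, the penultimate formula satisfies ψ_{n-1} = ⟨β*⟩ψ. -/
import Mathlib


mutual
  inductive Fml : Type
    | atom : ℕ → Fml
    | neg  : Fml → Fml
    | and  : Fml → Fml → Fml
    | or   : Fml → Fml → Fml
    | dia  : Prg → Fml → Fml
    | box  : Prg → Fml → Fml
  inductive Prg : Type
    | atom  : ℕ → Prg
    | seq   : Prg → Prg → Prg
    | union : Prg → Prg → Prg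
    | star  : Prg → Prg
    | test  : Fml → Prg
end

/-- A PDL model: worlds, relations for atomic programs, valuation. -/
structure Model where
  W : Type
  R : ℕ → W → W → Prop
  V : ℕ → W → Prop

mutual
  /-- Truth of a formula at a world. -/
  def Model.sat (M : Model) : M.W → Fml → Prop
    | w, .atom p  => M.V p w
    | w, .neg φ   => ¬ M.sat w φ
    | w, .and φ ψ => M.sat w φ ∧ M.sat w ψ
    | w, .or φ ψ  => M.sat w φ ∨ M.sat w ψ
    | w, .dia α φ => ∃ v, M.rel α w v ∧ M.sat v φ
    | w, .box α φ => ∀ v, M.rel α w v → M.sat v φ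
  /-- Interpretation of programs as binary relations. -/
  def Model.rel (M : Model) : Prg → M.W → M.W → Prop
    | .atom a, w, v    => M.R a w v
    | .seq α β, w, v   => ∃ u, M.rel α w u ∧ M.rel β u v
    | .union α β, w, v => M.rel α w v ∨ M.rel β w v
    | .star α, w, v    => Relation.ReflTransGen (fun x y => M.rel α x y) w v
    | .test φ, w, v    => w = v ∧ M.sat w φ
end

/-- The reduction relation ⇝ on diamond formulae. -/
inductive Red : Fml → Fml → Prop
  | seq (α β : Prg) (χ : Fml) : Red (.dia (.seq α β) χ) (.dia α (.dia β χ))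
  | unionL (α β : Prg) (χ : Fml) : Red (.dia (.union α β) χ) (.dia α χ)
  | unionR (α β : Prg) (χ : Fml) : Red (.dia (.union α β) χ) (.dia β χ)
  | star1 (α : Prg) (χ : Fml) : Red (.dia (.star α) χ) χ
  | star2 (α : Prg) (χ : Fml) : Red (.dia (.star α) χ) (.dia α (.dia (.star α) χ))
  | test (ψ χ : Fml) : Red (.dia (.test ψ) χ) χ

/-- Pre φ : formulae of the form ⟨β₁⟩…⟨β_m⟩φ with m ≥ 0. -/
inductive Pre (φ : Fml) : Fml → Prop
  | base : Pre φ φ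
  | dia (α : Prg) {ψ : Fml} : Pre φ ψ → Pre φ (.dia α ψ)

/-- ⟨α₁⟩…⟨α_k⟩ψ for a list of programs. -/
def dias : List Prg → Fml → Fml
  | [], φ => φ
  | α :: L, φ => .dia α (dias L φ)

/-- A witness chain for (φ, ψ, M, w), with data (n, ws, ψs). -/
def IsWitnessChain (M : Model) (φ ψ : Fml) (w : M.W)
    (n : ℕ) (ws : ℕ → M.W) (ψs : ℕ → Fml) : Prop :=
  0 < n ∧
  (∀ i ≤ n, Pre ψ (ψs i) ∧ M.sat (ws i) (ψs i)) ∧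
  ws 0 = w ∧ ψs 0 = φ ∧ ψs n = ψ ∧ (∀ i < n, ψs i ≠ ψ) ∧
  (∀ i ≤ n, ∀ j ≤ n, i ≠ j → (ws i, ψs i) ≠ (ws j, ψs j)) ∧
  (∀ i < n,
    (∀ (a : ℕ) (χ : Fml), ψs i = Fml.dia (.atom a) χ →
        ψs (i+1) = χ ∧ M.R a (ws i) (ws (i+1))) ∧
    ((∀ (a : ℕ) (χ : Fml), ψs i ≠ Fml.dia (.atom a) χ) →
        Red (ψs i) (ψs (i+1)) ∧ ws i = ws (i+1)))

lemma Pre_size {φ χ : Fml} (h : Pre φ χ) : sizeOf φ ≤ sizeOf χ := by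
  induction h with
  | base => exact le_refl _
  | dia α _ ih => simp only [Fml.dia.sizeOf_spec]; omega

lemma not_pre_self (β : Prg) (ψ : Fml) : ¬ Pre (.dia (.star β) ψ) ψ := by
  intro h
  have := Pre_size h
  simp only [Fml.dia.sizeOf_spec] at this
  omega

lemma dias_append (L : List Prg) (β : Prg) (ψ : Fml) :
    dias (L ++ [Prg.star β]) ψ = dias L (.dia (.star β) ψ) := by
  induction L with
  | nil => rfl
  | cons a L ih => simp [dias, ih]

lemma pre_dias (L : List Prg) (χ : Fml) : Pre χ (dias L χ) := by
  induction L with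
  | nil => exact Pre.base
  | cons a L ih => exact Pre.dia a ih

lemma red_pre {β : Prg} {ψ χ χ' : Fml} (hχ : Pre (.dia (.star β) ψ) χ)
    (hr : Red χ χ') :
    Pre (.dia (.star β) ψ) χ' ∨ (χ = .dia (.star β) ψ ∧ χ' = ψ) := by
  cases hχ with
  | base =>
    cases hr with
    | star1 => exact Or.inr ⟨rfl, rfl⟩
    | star2 => exact Or.inl (Pre.dia _ Pre.base)
  | dia α h0 =>
    cases hr with
    | seq α' β' χ0 => exact Or.inl (Pre.dia _ (Pre.dia _ h0))
    | unionL => exact Or.inl (Pre.dia _ h0)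
    | unionR => exact Or.inl (Pre.dia _ h0)
    | star1 => exact Or.inl h0
    | star2 => exact Or.inl (Pre.dia _ (Pre.dia _ h0))
    | test => exact Or.inl h0

lemma step_pre {β : Prg} {ψ : Fml} {M : Model} {n : ℕ} {ws : ℕ → M.W}
    {ψs : ℕ → Fml}
    (hstep : ∀ i < n,
      (∀ (a : ℕ) (χ : Fml), ψs i = Fml.dia (.atom a) χ →
          ψs (i+1) = χ ∧ M.R a (ws i) (ws (i+1))) ∧
      ((∀ (a : ℕ) (χ : Fml), ψs i ≠ Fml.dia (.atom a) χ) →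
          Red (ψs i) (ψs (i+1)) ∧ ws i = ws (i+1)))
    {i : ℕ} (hi : i < n) (hp : Pre (.dia (.star β) ψ) (ψs i)) :
    Pre (.dia (.star β) ψ) (ψs (i+1)) ∨
      (ψs i = .dia (.star β) ψ ∧ ψs (i+1) = ψ) := by
  obtain ⟨hat, hred⟩ := hstep i hi
  by_cases hc : ∃ (a : ℕ) (χ : Fml), ψs i = Fml.dia (.atom a) χ
  · obtain ⟨a, χ, he⟩ := hc
    have h1 := (hat a χ he).1
    rw [he] at hp
    cases hp with
    | dia α h0 => exact Or.inl (h1.symm ▸ h0)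
  · push_neg at hc
    exact red_pre hp ((hred hc).1)

theorem witness_chain_penultimate (M : Model) (w : M.W) (L : List Prg)
    (β : Prg) (ψ : Fml) (n : ℕ) (ws : ℕ → M.W) (ψs : ℕ → Fml)
    (h : IsWitnessChain M (dias (L ++ [Prg.star β]) ψ) ψ w n ws ψs) :
    ψs (n - 1) = .dia (.star β) ψ := by
  obtain ⟨hn, _, _, h0, hnψ, hne, _, hstep⟩ := h
  have key : ∀ i < n, Pre (.dia (.star β) ψ) (ψs i) := by
    intro i
    induction i with
    | zero =>
      intro _
      rw [h0]
      rw [dias_append]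
      exact pre_dias L _
    | succ i ih =>
      intro hi1
      have hi : i < n := Nat.lt_of_succ_lt hi1
      rcases step_pre hstep hi (ih hi) with hp | ⟨_, he⟩
      · exact hp
      · exact absurd he (hne _ hi1)
  have hlt : n - 1 < n := Nat.sub_lt hn one_pos
  have heq : n - 1 + 1 = n := Nat.succ_pred_eq_of_pos hn
  rcases step_pre hstep hlt (key _ hlt) with hp | ⟨he, _⟩
  · rw [heq, hnψ] at hp
    exact absurd hp (not_pre_self β ψ)
  · exact he
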